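/- Fix an integer q≥3 and set a(x) = ((q−1)e^x − e^{2x})/(e^x+q−1)³ for x≥0, and for t>0 and r∈ℝ set Φ(t) = ∫_t^∞ x^r·a(x) dx. Then: (i) for every r≥0, lim_{t→0+} Φ(t) = ∫_0^∞ x^r·a(x) dx is finite and strictly negative; (ii) for every r≤−1, lim_{t→0+} Φ(t) = +∞ (the integral ∫_0^∞ x^r·a(x)dx diverges to +∞); (iii) for r∈(−1,0) the integral L_q(r) = ∫_0^∞ x^r·a(x) dx is finite and L_q(r) → +∞ as r↓−1. -/

import Mathlib

/-!
Write `a = afun q`. It is the derivative of `F(x) = eˣ / (eˣ + q - 1)²`, so `∫₀^∞ a = -F(0) = -1/q²`,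
and `|a(x)| ≤ e⁻ˣ`, which makes every `x ^ r * a x` with `r > -1` integrable on `(0, ∞)`.
For `r ≥ 0`: `a` is positive before `x₀ = log (q - 1)` and negative after it, so
`x ^ r a(x) ≤ x₀ ^ r a(x)` everywhere and `∫₀^∞ x ^ r a ≤ -x₀ ^ r / q² < 0`.
Near `0`, `a ≥ a(0)/2 = (q - 2)/(2q³) > 0`. Hence for `r ≤ -1` the integrand dominates a
multiple of `1/x` and `Φ(t) ≥ c log (1/t) - C`, while for `-1 < r < 0` the integral over `(0, δ)`
is at least `c δ ^ (r + 1) / (r + 1)` and the rest is bounded below uniformly in `r`.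
-/

open MeasureTheory Filter Topology Set

/-- `a(x) = ((q−1)e^x − e^{2x})/(e^x+q−1)³`. -/
noncomputable def afun (q : ℝ) (x : ℝ) : ℝ :=
  ((q - 1) * Real.exp x - Real.exp (2 * x)) / (Real.exp x + q - 1) ^ 3

open Real

theorem tendsto_setIntegral_Ioi_nhdsGT {E : Type*} [NormedAddCommGroup E] [NormedSpace ℝ E]
    {g : ℝ → E} {a : ℝ} (hg : IntegrableOn g (Ioi a)) :
    Tendsto (fun t => ∫ x in Ioi t, g x) (𝓝[>] a) (𝓝 (∫ x in Ioi a, g x)) := by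
  have hprim : Tendsto (fun t => ∫ x in a..t, g x) (𝓝[>] a) (𝓝 0) := by
    have hcont : ContinuousWithinAt (fun t => ∫ x in a..t, g x) (Icc a (a + 1)) a := by
      refine intervalIntegral.continuousWithinAt_primitive (measure_singleton a) ?_
      rw [min_self, max_eq_right (by linarith)]
      exact (intervalIntegrable_iff_integrableOn_Ioc_of_le (by linarith)).2
        (hg.mono_set Ioc_subset_Ioi_self)
    simpa using ((hcont.mono_of_mem_nhdsWithin (Icc_mem_nhdsGE (by linarith))).mono
      Ioi_subset_Ici_self).tendsto
  have hlim : Tendsto (fun t => (∫ x in Ioi a, g x) - ∫ x in a..t, g x) (𝓝[>] a)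
      (𝓝 (∫ x in Ioi a, g x)) := by
    simpa using tendsto_const_nhds.sub hprim
  refine hlim.congr' ?_
  filter_upwards [self_mem_nhdsWithin] with t ht
  rw [← intervalIntegral.integral_Ioi_sub_Ioi hg (le_of_lt ht), sub_sub_cancel]

theorem tendsto_setIntegral_Ioi_atTop_of_eventually_inv_le {f : ℝ → ℝ} {c : ℝ} (hc : 0 < c)
    (hf : ∀ t > 0, IntegrableOn f (Ioi t)) (hlow : ∀ᶠ x in 𝓝[>] 0, c * x⁻¹ ≤ f x) :
    Tendsto (fun t => ∫ x in Ioi t, f x) (𝓝[>] 0) atTop := by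
  obtain ⟨δ, hδ, hsub⟩ := mem_nhdsGT_iff_exists_Ioc_subset.1 hlow
  have hbound : ∀ t ∈ Ioo 0 δ,
      c * (log δ - log t) + ∫ x in Ioi δ, f x ≤ ∫ x in Ioi t, f x := by
    rintro t ⟨ht, htδ⟩
    rw [← intervalIntegral.integral_interval_add_Ioi (hf t ht) (hf δ hδ)]
    gcongr
    have h0 : (0 : ℝ) ∉ uIcc t δ := notMem_uIcc_of_lt ht (ht.trans htδ)
    have hinv : IntervalIntegrable (fun x => c * x⁻¹) volume t δ :=
      (intervalIntegral.intervalIntegrable_inv (fun x hx => ne_of_mem_of_not_mem hx h0)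
        continuousOn_id).const_mul c
    calc c * (log δ - log t) = ∫ x in t..δ, c * x⁻¹ := by
          rw [intervalIntegral.integral_const_mul, integral_inv h0, log_div hδ.ne' ht.ne']
      _ ≤ ∫ x in t..δ, f x :=
          intervalIntegral.integral_mono_on_of_le_Ioo htδ.le hinv
            ((intervalIntegrable_iff_integrableOn_Ioc_of_le htδ.le).2
              ((hf t ht).mono_set Ioc_subset_Ioi_self))
            (fun x hx => hsub ⟨ht.trans hx.1, hx.2.le⟩)
  have hlog : Tendsto (fun t => log δ - log t) (𝓝[>] 0) atTop := by
    simpa only [sub_eq_add_neg, Function.comp_def] using tendsto_atTop_add_const_left _ (log δ)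
      (tendsto_neg_atBot_atTop.comp tendsto_log_nhdsGT_zero)
  exact tendsto_atTop_mono' _ (eventually_of_mem (Ioo_mem_nhdsGT hδ) hbound)
    (tendsto_atTop_add_const_right _ _ (hlog.const_mul_atTop hc))

section

variable {a : ℝ → ℝ}

theorem setIntegral_rpow_mul_neg_of_sign_change {x₀ r : ℝ} (hx₀ : 0 < x₀) (hr : 0 ≤ r)
    (hpos : ∀ x ∈ Ioc 0 x₀, 0 ≤ a x) (hneg : ∀ x, x₀ ≤ x → a x ≤ 0)
    (ha : IntegrableOn a (Ioi 0)) (hra : IntegrableOn (fun x => x ^ r * a x) (Ioi 0))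
    (hint : ∫ x in Ioi 0, a x < 0) : ∫ x in Ioi 0, x ^ r * a x < 0 := by
  have hle : ∀ x ∈ Ioi 0, x ^ r * a x ≤ x₀ ^ r * a x := by
    intro x (hx : 0 < x)
    rcases le_total x x₀ with h | h
    · exact mul_le_mul_of_nonneg_right (rpow_le_rpow hx.le h hr) (hpos x ⟨hx, h⟩)
    · exact mul_le_mul_of_nonpos_right (rpow_le_rpow hx₀.le h hr) (hneg x h)
  calc ∫ x in Ioi 0, x ^ r * a x ≤ ∫ x in Ioi 0, x₀ ^ r * a x :=
        setIntegral_mono_on hra (ha.const_mul _) measurableSet_Ioi hle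
    _ = x₀ ^ r * ∫ x in Ioi 0, a x := integral_const_mul _ _
    _ < 0 := mul_neg_of_pos_of_neg (rpow_pos_of_pos hx₀ r) hint

theorem integrableOn_rpow_mul_of_abs_le_exp_neg (ha : Measurable a)
    (hb : ∀ x, |a x| ≤ exp (-x)) {r : ℝ} (hr : -1 < r) :
    IntegrableOn (fun x => x ^ r * a x) (Ioi 0) := by
  have hG := GammaIntegral_convergent (show 0 < r + 1 by linarith)
  rw [add_sub_cancel_right] at hG
  refine hG.mono' ((measurable_id.pow_const r).mul ha).aestronglyMeasurable ?_
  filter_upwards [ae_restrict_mem measurableSet_Ioi] with x (hx : 0 < x)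
  rw [norm_mul, norm_of_nonneg (rpow_nonneg hx.le r), norm_eq_abs, mul_comm]
  exact mul_le_mul_of_nonneg_right (hb x) (rpow_nonneg hx.le r)

theorem integrableOn_Ioi_rpow_mul_of_abs_le_exp_neg (ha : Measurable a)
    (hb : ∀ x, |a x| ≤ exp (-x)) {r t : ℝ} (hr : r ≤ 0) (ht : 0 < t) :
    IntegrableOn (fun x => x ^ r * a x) (Ioi t) := by
  refine ((integrableOn_exp_neg_Ioi t).const_mul (t ^ r)).mono'
    ((measurable_id.pow_const r).mul ha).aestronglyMeasurable ?_
  filter_upwards [ae_restrict_mem measurableSet_Ioi] with x (hx : t < x)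
  have hx0 : 0 < x := ht.trans hx
  rw [norm_mul, norm_of_nonneg (rpow_nonneg hx0.le r), norm_eq_abs]
  exact mul_le_mul (rpow_le_rpow_of_nonpos ht hx.le hr) (hb x) (abs_nonneg _)
    (rpow_nonneg ht.le r)

theorem neg_inv_le_setIntegral_Ioi_rpow_mul (ha : Measurable a)
    (hb : ∀ x, |a x| ≤ exp (-x)) {r δ : ℝ} (hr : -1 ≤ r) (hr0 : r ≤ 0) (hδ : 0 < δ)
    (hδ1 : δ ≤ 1) : -δ⁻¹ ≤ ∫ x in Ioi δ, x ^ r * a x := by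
  have hlow : ∀ x ∈ Ioi δ, -δ⁻¹ * exp (-x) ≤ x ^ r * a x := by
    intro x (hx : δ < x)
    have hx0 : 0 < x := hδ.trans hx
    have hxr : x ^ r ≤ δ⁻¹ :=
      calc x ^ r ≤ δ ^ r := rpow_le_rpow_of_nonpos hδ hx.le hr0
        _ ≤ δ ^ (-1 : ℝ) := rpow_le_rpow_of_exponent_ge hδ hδ1 hr
        _ = δ⁻¹ := rpow_neg_one δ
    have habs : |x ^ r * a x| ≤ δ⁻¹ * exp (-x) := by
      rw [abs_mul, abs_of_nonneg (rpow_nonneg hx0.le r)]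
      exact mul_le_mul hxr (hb x) (abs_nonneg _) (inv_nonneg.2 hδ.le)
    linarith [neg_abs_le (x ^ r * a x)]
  calc -δ⁻¹ ≤ -δ⁻¹ * exp (-δ) := by
        have : exp (-δ) ≤ 1 := exp_le_one_iff.2 (by linarith)
        nlinarith [inv_pos.2 hδ, exp_pos (-δ)]
    _ = ∫ x in Ioi δ, -δ⁻¹ * exp (-x) := by rw [integral_const_mul, integral_exp_neg_Ioi]
    _ ≤ ∫ x in Ioi δ, x ^ r * a x :=
        setIntegral_mono_on ((integrableOn_exp_neg_Ioi δ).const_mul _)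
          (integrableOn_Ioi_rpow_mul_of_abs_le_exp_neg ha hb hr0 hδ) measurableSet_Ioi hlow

theorem le_setIntegral_rpow_mul (ha : Measurable a)
    (hb : ∀ x, |a x| ≤ exp (-x)) {c δ r : ℝ} (hc : 0 ≤ c) (hδ : 0 < δ) (hδ1 : δ ≤ 1)
    (hlow : ∀ x ∈ Ioc 0 δ, c ≤ a x) (hr : r ∈ Ioo (-1) 0) :
    c * δ / (r + 1) - δ⁻¹ ≤ ∫ x in Ioi 0, x ^ r * a x := by
  obtain ⟨hr1, hr0⟩ := hr
  have hr1' : 0 < r + 1 := by linarith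
  have hint := integrableOn_rpow_mul_of_abs_le_exp_neg ha hb hr1
  rw [← intervalIntegral.integral_interval_add_Ioi hint (hint.mono_set (Ioi_subset_Ioi hδ.le)),
    sub_eq_add_neg]
  refine add_le_add ?_ (neg_inv_le_setIntegral_Ioi_rpow_mul ha hb hr1.le hr0.le hδ hδ1)
  have hδr : δ ≤ δ ^ (r + 1) := by
    simpa using rpow_le_rpow_of_exponent_ge hδ hδ1 (show r + 1 ≤ 1 by linarith)
  calc c * δ / (r + 1) ≤ c * (δ ^ (r + 1) / (r + 1)) := by
        rw [mul_div_assoc]; gcongr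
    _ = ∫ x in 0..δ, c * x ^ r := by
        rw [intervalIntegral.integral_const_mul, integral_rpow (Or.inl hr1),
          zero_rpow hr1'.ne', sub_zero]
    _ ≤ ∫ x in 0..δ, x ^ r * a x :=
        intervalIntegral.integral_mono_on_of_le_Ioo hδ.le
          ((intervalIntegral.intervalIntegrable_rpow' hr1).const_mul c)
          ((intervalIntegrable_iff_integrableOn_Ioc_of_le hδ.le).2
            (hint.mono_set Ioc_subset_Ioi_self))
          (fun x hx => by
            rw [mul_comm]
            exact mul_le_mul_of_nonneg_left (hlow x ⟨hx.1, hx.2.le⟩) (rpow_nonneg hx.1.le r))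

theorem tendsto_setIntegral_Ioi_rpow_mul_atTop (ha : Measurable a)
    (hb : ∀ x, |a x| ≤ exp (-x)) {c r : ℝ} (hc : 0 < c) (hlow : ∀ᶠ x in 𝓝[>] 0, c ≤ a x)
    (hr : r ≤ -1) : Tendsto (fun t => ∫ x in Ioi t, x ^ r * a x) (𝓝[>] 0) atTop := by
  refine tendsto_setIntegral_Ioi_atTop_of_eventually_inv_le hc
    (fun t ht => integrableOn_Ioi_rpow_mul_of_abs_le_exp_neg ha hb (by linarith) ht) ?_
  filter_upwards [hlow, self_mem_nhdsWithin, Ioc_mem_nhdsGT zero_lt_one]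
    with x hcx (hx : 0 < x) hx1
  calc c * x⁻¹ = x ^ (-1 : ℝ) * c := by rw [rpow_neg_one, mul_comm]
    _ ≤ x ^ r * a x :=
        mul_le_mul (rpow_le_rpow_of_exponent_ge hx hx1.2 hr) hcx hc.le (rpow_nonneg hx.le r)

theorem tendsto_setIntegral_rpow_mul_nhdsGT_neg_one_atTop (ha : Measurable a)
    (hb : ∀ x, |a x| ≤ exp (-x)) {c : ℝ} (hc : 0 < c) (hlow : ∀ᶠ x in 𝓝[>] 0, c ≤ a x) :
    Tendsto (fun r => ∫ x in Ioi 0, x ^ r * a x) (𝓝[>] (-1 : ℝ)) atTop := by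
  obtain ⟨δ, hδ, hsub⟩ := mem_nhdsGT_iff_exists_Ioc_subset.1 hlow
  have hbound : ∀ r ∈ Ioo (-1 : ℝ) 0,
      c * min δ 1 / (r + 1) - (min δ 1)⁻¹ ≤ ∫ x in Ioi 0, x ^ r * a x :=
    fun r hr => le_setIntegral_rpow_mul ha hb hc.le (lt_min hδ one_pos) (min_le_right _ _)
      (fun x hx => hsub ⟨hx.1, hx.2.trans (min_le_left _ _)⟩) hr
  have hshift : Tendsto (fun r : ℝ => r + 1) (𝓝[>] (-1)) (𝓝[>] 0) := by
    refine tendsto_nhdsWithin_iff.2 ⟨?_, ?_⟩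
    · exact ((continuous_add_const 1).tendsto' (-1) 0 (by norm_num)).mono_left
        nhdsWithin_le_nhds
    · filter_upwards [self_mem_nhdsWithin] with r (hr : -1 < r)
      exact mem_Ioi.2 (by linarith)
  refine tendsto_atTop_mono' _ (eventually_of_mem (Ioo_mem_nhdsGT (by norm_num)) hbound) ?_
  simp_rw [div_eq_mul_inv]
  exact tendsto_atTop_add_const_right _ _
    (hshift.inv_tendsto_nhdsGT_zero.const_mul_atTop (mul_pos hc (lt_min hδ one_pos)))

end

theorem exp_add_sub_one_pos {q : ℝ} (hq : 1 ≤ q) (x : ℝ) : 0 < exp x + q - 1 := by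
  linarith [exp_pos x]

namespace afun

variable {q : ℝ}

theorem eq_mul_div (q x : ℝ) :
    afun q x = exp x * (q - 1 - exp x) / (exp x + q - 1) ^ 3 := by
  rw [afun, two_mul, exp_add]
  ring

theorem continuous (hq : 1 ≤ q) : Continuous (afun q) := by
  unfold afun
  exact Continuous.div (by fun_prop) (by fun_prop)
    fun x => pow_ne_zero 3 (exp_add_sub_one_pos hq x).ne'

theorem abs_le_exp_neg (hq : 1 ≤ q) (x : ℝ) : |afun q x| ≤ exp (-x) := by
  have hD := exp_add_sub_one_pos hq x
  have hE := exp_pos x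
  rw [eq_mul_div, abs_div, abs_mul, abs_of_pos hE, abs_of_pos (pow_pos hD 3), exp_neg,
    div_le_iff₀ (pow_pos hD 3)]
  have hnum : |q - 1 - exp x| ≤ exp x + q - 1 := abs_le.2 ⟨by linarith, by linarith⟩
  have hsq : exp x * exp x ≤ (exp x + q - 1) ^ 2 := by nlinarith
  calc exp x * |q - 1 - exp x| ≤ exp x * (exp x + q - 1) := by gcongr
    _ ≤ (exp x)⁻¹ * (exp x + q - 1) ^ 3 := by
        rw [inv_mul_eq_div, le_div_iff₀ hE]; nlinarith

theorem hasDerivAt (hq : 1 ≤ q) (x : ℝ) :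
    HasDerivAt (fun y => exp y / (exp y + q - 1) ^ 2) (afun q x) x := by
  have hD : exp x + (q - 1) ≠ 0 := by linarith [exp_add_sub_one_pos hq x]
  simp_rw [add_sub_assoc]
  refine ((hasDerivAt_exp x).fun_div (((hasDerivAt_exp x).add_const (q - 1)).fun_pow 2)
    (pow_ne_zero 2 hD)).congr_deriv ?_
  rw [eq_mul_div]
  simp only [add_sub_assoc]
  field_simp
  ring

theorem integrableOn_Ioi (hq : 1 ≤ q) (t : ℝ) : IntegrableOn (afun q) (Ioi t) :=
  (integrableOn_exp_neg_Ioi t).mono' (continuous hq).aestronglyMeasurable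
    (Eventually.of_forall (abs_le_exp_neg hq))

theorem integral_Ioi_zero (hq : 1 ≤ q) : ∫ x in Ioi 0, afun q x = -(q ^ 2)⁻¹ := by
  have hF : Continuous fun y => exp y / (exp y + q - 1) ^ 2 :=
    Continuous.div (by fun_prop) (by fun_prop)
      fun y => pow_ne_zero 2 (exp_add_sub_one_pos hq y).ne'
  have hlim : Tendsto (fun y => exp y / (exp y + q - 1) ^ 2) atTop (𝓝 0) := by
    refine tendsto_of_tendsto_of_tendsto_of_le_of_le tendsto_const_nhds
      tendsto_exp_neg_atTop_nhds_zero (fun y => by positivity) fun y => ?_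
    have hD := exp_add_sub_one_pos hq y
    rw [div_le_iff₀ (by positivity), exp_neg, inv_mul_eq_div, le_div_iff₀ (exp_pos y)]
    nlinarith [exp_pos y]
  rw [integral_Ioi_of_hasDerivAt_of_tendsto hF.continuousWithinAt
    (fun x _ => hasDerivAt hq x) (integrableOn_Ioi hq 0) hlim]
  simp

theorem nonneg_of_exp_le (hq : 1 ≤ q) {x : ℝ} (hx : exp x ≤ q - 1) : 0 ≤ afun q x := by
  rw [eq_mul_div]
  have := exp_add_sub_one_pos hq x
  exact div_nonneg (mul_nonneg (exp_pos x).le (by linarith)) (by positivity)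

theorem nonpos_of_le_exp (hq : 1 ≤ q) {x : ℝ} (hx : q - 1 ≤ exp x) : afun q x ≤ 0 := by
  rw [eq_mul_div]
  have := exp_add_sub_one_pos hq x
  exact div_nonpos_of_nonpos_of_nonneg (mul_nonpos_of_nonneg_of_nonpos (exp_pos x).le
    (by linarith)) (by positivity)

theorem apply_zero (q : ℝ) : afun q 0 = (q - 2) / q ^ 3 := by
  rw [eq_mul_div, exp_zero]
  ring_nf

theorem setIntegral_rpow_mul_neg (hq : 2 < q) {r : ℝ} (hr : 0 ≤ r) :
    ∫ x in Ioi 0, x ^ r * afun q x < 0 := by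
  have hq1 : 1 ≤ q := by linarith
  have hx₀ : exp (log (q - 1)) = q - 1 := exp_log (by linarith)
  refine setIntegral_rpow_mul_neg_of_sign_change (log_pos (by linarith)) hr
    (fun x hx => nonneg_of_exp_le hq1 (hx₀ ▸ exp_le_exp.2 hx.2))
    (fun x hx => nonpos_of_le_exp hq1 (hx₀ ▸ exp_le_exp.2 hx)) (integrableOn_Ioi hq1 0)
    (integrableOn_rpow_mul_of_abs_le_exp_neg (continuous hq1).measurable (abs_le_exp_neg hq1)
      (by linarith)) ?_
  rw [integral_Ioi_zero hq1]
  exact neg_neg_of_pos (by positivity)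

end afun

/-- **Behavior of `Φ(t)=∫_t^∞ x^r a(x)dx` as `t→0+`**: (i) for `r ≥ 0` the limit is the
finite, strictly negative integral `∫_0^∞ x^r a(x)dx`; (ii) for `r ≤ −1` the integral
diverges and `Φ(t)→+∞`; (iii) for `r ∈ (−1,0)` the integral `L_q(r)` is finite and
`L_q(r)→+∞` as `r↓−1`. -/
theorem pareto_phi_limits (q : ℕ) (hq : 3 ≤ q) :
    (∀ r : ℝ, 0 ≤ r →
      IntegrableOn (fun x : ℝ => x ^ r * afun q x) (Ioi 0) ∧
      (∫ x in Ioi (0 : ℝ), x ^ r * afun q x) < 0 ∧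
      Tendsto (fun t : ℝ => ∫ x in Ioi t, x ^ r * afun q x) (𝓝[>] 0)
        (𝓝 (∫ x in Ioi (0 : ℝ), x ^ r * afun q x))) ∧
    (∀ r : ℝ, r ≤ -1 →
      ¬ IntegrableOn (fun x : ℝ => x ^ r * afun q x) (Ioi 0) ∧
      Tendsto (fun t : ℝ => ∫ x in Ioi t, x ^ r * afun q x) (𝓝[>] 0) atTop) ∧
    (∀ r ∈ Ioo (-1 : ℝ) 0,
      IntegrableOn (fun x : ℝ => x ^ r * afun q x) (Ioi 0)) ∧
    Tendsto (fun r : ℝ => ∫ x in Ioi (0 : ℝ), x ^ r * afun q x) (𝓝[>] (-1)) atTop := by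
  have hq2 : (2 : ℝ) < q := by exact_mod_cast hq
  have hq1 : (1 : ℝ) ≤ q := by linarith
  have hmeas := (afun.continuous hq1).measurable
  have hb := afun.abs_le_exp_neg hq1
  have h0 : 0 < afun q 0 := by
    rw [afun.apply_zero]
    exact div_pos (by linarith) (by positivity)
  have hc : 0 < afun q 0 / 2 := half_pos h0
  have hnear : ∀ᶠ x in 𝓝[>] 0, afun q 0 / 2 ≤ afun q x :=
    nhdsWithin_le_nhds (((afun.continuous hq1).tendsto 0).eventually
      (le_mem_nhds (half_lt_self h0)))
  refine ⟨fun r hr => ?_, fun r hr => ?_,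
    fun r hr => integrableOn_rpow_mul_of_abs_le_exp_neg hmeas hb hr.1,
    tendsto_setIntegral_rpow_mul_nhdsGT_neg_one_atTop hmeas hb hc hnear⟩
  · have hint := integrableOn_rpow_mul_of_abs_le_exp_neg hmeas hb (by linarith : (-1 : ℝ) < r)
    exact ⟨hint, afun.setIntegral_rpow_mul_neg hq2 hr, tendsto_setIntegral_Ioi_nhdsGT hint⟩
  · have hdiv := tendsto_setIntegral_Ioi_rpow_mul_atTop hmeas hb hc hnear hr
    exact ⟨fun h => not_tendsto_nhds_of_tendsto_atTop hdiv _ (tendsto_setIntegral_Ioi_nhdsGT h),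
      hdiv⟩
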